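/- For any positive semidefinite matrices Q₁, Q₂ and any c ∈ [0,1], the Riccati map satisfies ρ(cQ₁ + (1−c)Q₂) ⪰ c·ρ(Q₁) + (1−c)·ρ(Q₂) in the Loewner order, i.e., the Riccati map is concave on the positive semidefinite cone. -/

import Mathlib

/-!
For a fixed gain `K`, the covariance `Φw + (A - K C) Q (A - K C)ᵀ + K Φv Kᵀ` is affine in `Q`, and
completing the square in `K` shows that it exceeds `ρ(Q)` by `(K - K_Q) S_Q (K - K_Q)ᵀ ⪰ 0`, where
`S_Q = C Q Cᵀ + Φv` and `K_Q = A Q Cᵀ S_Q⁻¹` is the Kalman gain. Hence `ρ` is a pointwise minimum of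
affine maps, attained at `K_Q`. Evaluating at the gain of `c Q₁ + (1 - c) Q₂` gives concavity.
-/

open Matrix

noncomputable def riccati {n p : ℕ} (A : Matrix (Fin n) (Fin n) ℝ)
    (C : Matrix (Fin p) (Fin n) ℝ) (Φw : Matrix (Fin n) (Fin n) ℝ)
    (Φv : Matrix (Fin p) (Fin p) ℝ) (Q : Matrix (Fin n) (Fin n) ℝ) :
    Matrix (Fin n) (Fin n) ℝ :=
  Φw + A * Q * Aᵀ - A * Q * Cᵀ * (C * Q * Cᵀ + Φv)⁻¹ * (C * Q * Aᵀ)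

theorem Matrix.completing_square {m l R : Type*} [Fintype l] [DecidableEq l] [CommRing R]
    (K M : Matrix m l R) {S : Matrix l l R} (hS : S.IsSymm) (hS_det : IsUnit S.det) :
    (K - M * S⁻¹) * S * (K - M * S⁻¹)ᵀ = K * S * Kᵀ - K * Mᵀ - M * Kᵀ + M * S⁻¹ * Mᵀ := by
  simp only [transpose_sub, transpose_mul, transpose_nonsing_inv, hS.eq, Matrix.sub_mul,
    Matrix.mul_sub, Matrix.mul_assoc, mul_nonsing_inv_cancel_left _ _ hS_det,
    nonsing_inv_mul_cancel_left _ _ hS_det]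
  abel

namespace Riccati

variable {n p : ℕ} (A : Matrix (Fin n) (Fin n) ℝ) (C : Matrix (Fin p) (Fin n) ℝ)
  (Φw : Matrix (Fin n) (Fin n) ℝ) (Φv : Matrix (Fin p) (Fin p) ℝ)

noncomputable def kalmanGain (Q : Matrix (Fin n) (Fin n) ℝ) : Matrix (Fin n) (Fin p) ℝ :=
  A * Q * Cᵀ * (C * Q * Cᵀ + Φv)⁻¹

def gainCovariance (K : Matrix (Fin n) (Fin p) ℝ) (Q : Matrix (Fin n) (Fin n) ℝ) :
    Matrix (Fin n) (Fin n) ℝ :=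
  Φw + (A - K * C) * Q * (A - K * C)ᵀ + K * Φv * Kᵀ

lemma gainCovariance_smul_add_smul (K : Matrix (Fin n) (Fin p) ℝ)
    (Q₁ Q₂ : Matrix (Fin n) (Fin n) ℝ) (c : ℝ) :
    gainCovariance A C Φw Φv K (c • Q₁ + (1 - c) • Q₂)
      = c • gainCovariance A C Φw Φv K Q₁ + (1 - c) • gainCovariance A C Φw Φv K Q₂ := by
  simp only [gainCovariance, Matrix.mul_add, Matrix.add_mul, Matrix.mul_smul, Matrix.smul_mul]
  module

lemma gainCovariance_sub_riccati {Q : Matrix (Fin n) (Fin n) ℝ} (hQ : Q.IsSymm)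
    (hΦv : Φv.IsSymm) (hS : IsUnit (C * Q * Cᵀ + Φv).det) (K : Matrix (Fin n) (Fin p) ℝ) :
    gainCovariance A C Φw Φv K Q - riccati A C Φw Φv Q
      = (K - kalmanGain A C Φv Q) * (C * Q * Cᵀ + Φv) * (K - kalmanGain A C Φv Q)ᵀ := by
  have hS_symm : (C * Q * Cᵀ + Φv).IsSymm := by
    simp only [IsSymm, transpose_add, transpose_mul, transpose_transpose, hQ.eq, hΦv.eq,
      Matrix.mul_assoc]
  have hCQA : C * Q * Aᵀ = (A * Q * Cᵀ)ᵀ := by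
    simp only [transpose_mul, transpose_transpose, hQ.eq, Matrix.mul_assoc]
  rw [kalmanGain, Matrix.completing_square K _ hS_symm hS, gainCovariance, riccati, hCQA]
  simp only [transpose_sub, transpose_mul, transpose_transpose, hQ.eq, Matrix.sub_mul,
    Matrix.mul_sub, Matrix.add_mul, Matrix.mul_add, Matrix.mul_assoc]
  abel

lemma gainCovariance_kalmanGain {Q : Matrix (Fin n) (Fin n) ℝ} (hQ : Q.IsSymm)
    (hΦv : Φv.IsSymm) (hS : IsUnit (C * Q * Cᵀ + Φv).det) :
    gainCovariance A C Φw Φv (kalmanGain A C Φv Q) Q = riccati A C Φw Φv Q := by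
  simpa [sub_eq_zero] using gainCovariance_sub_riccati A C Φw Φv hQ hΦv hS (kalmanGain A C Φv Q)

lemma posDef_innovationCovariance {Q : Matrix (Fin n) (Fin n) ℝ} (hQ : Q.PosSemidef)
    (hΦv : Φv.PosDef) : (C * Q * Cᵀ + Φv).PosDef := by
  simpa [conjTranspose_eq_transpose_of_trivial] using
    PosDef.posSemidef_add (hQ.mul_mul_conjTranspose_same C) hΦv

lemma posSemidef_gainCovariance_sub_riccati {Q : Matrix (Fin n) (Fin n) ℝ}
    (hQ : Q.PosSemidef) (hΦv : Φv.PosDef) (K : Matrix (Fin n) (Fin p) ℝ) :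
    (gainCovariance A C Φw Φv K Q - riccati A C Φw Φv Q).PosSemidef := by
  have hS := posDef_innovationCovariance C Φv hQ hΦv
  rw [gainCovariance_sub_riccati A C Φw Φv (isHermitian_iff_isSymm.1 hQ.isHermitian)
    (isHermitian_iff_isSymm.1 hΦv.isHermitian) hS.det_pos.ne'.isUnit]
  simpa [conjTranspose_eq_transpose_of_trivial] using
    hS.posSemidef.mul_mul_conjTranspose_same (K - kalmanGain A C Φv Q)

end Riccati

open Riccati in
theorem riccati_concave_general {n p : ℕ} (A : Matrix (Fin n) (Fin n) ℝ)
    (C : Matrix (Fin p) (Fin n) ℝ) (Φw : Matrix (Fin n) (Fin n) ℝ)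
    (Φv : Matrix (Fin p) (Fin p) ℝ) (hΦv : Φv.PosDef)
    (Q₁ Q₂ : Matrix (Fin n) (Fin n) ℝ) (hQ₁ : Q₁.PosSemidef) (hQ₂ : Q₂.PosSemidef)
    (c : ℝ) (hc : c ∈ Set.Icc (0 : ℝ) 1) :
    (riccati A C Φw Φv (c • Q₁ + (1 - c) • Q₂)
      - (c • riccati A C Φw Φv Q₁ + (1 - c) • riccati A C Φw Φv Q₂)).PosSemidef := by
  obtain ⟨hc₀, hc₁⟩ := hc
  set Q := c • Q₁ + (1 - c) • Q₂
  have hQ : Q.PosSemidef := (hQ₁.smul hc₀).add (hQ₂.smul (sub_nonneg.2 hc₁))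
  set G := gainCovariance A C Φw Φv (kalmanGain A C Φv Q)
  have hρQ : riccati A C Φw Φv Q = c • G Q₁ + (1 - c) • G Q₂ := by
    rw [← gainCovariance_smul_add_smul, gainCovariance_kalmanGain A C Φw Φv
      (isHermitian_iff_isSymm.1 hQ.isHermitian) (isHermitian_iff_isSymm.1 hΦv.isHermitian)
      (posDef_innovationCovariance C Φv hQ hΦv).det_pos.ne'.isUnit]
  rw [hρQ, show ∀ G₁ G₂ R₁ R₂ : Matrix (Fin n) (Fin n) ℝ,
      c • G₁ + (1 - c) • G₂ - (c • R₁ + (1 - c) • R₂) = c • (G₁ - R₁) + (1 - c) • (G₂ - R₂)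
    from fun _ _ _ _ ↦ by module]
  exact ((posSemidef_gainCovariance_sub_riccati A C Φw Φv hQ₁ hΦv _).smul hc₀).add
    ((posSemidef_gainCovariance_sub_riccati A C Φw Φv hQ₂ hΦv _).smul (sub_nonneg.2 hc₁))

/-- Concavity of the Riccati map on the positive semidefinite cone. -/
theorem riccati_concave {n p : ℕ} (A : Matrix (Fin n) (Fin n) ℝ)
    (C : Matrix (Fin p) (Fin n) ℝ) (Φw : Matrix (Fin n) (Fin n) ℝ)
    (Φv : Matrix (Fin p) (Fin p) ℝ) (hΦw : Φw.PosSemidef) (hΦv : Φv.PosDef)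
    (Q₁ Q₂ : Matrix (Fin n) (Fin n) ℝ) (hQ₁ : Q₁.PosSemidef) (hQ₂ : Q₂.PosSemidef)
    (c : ℝ) (hc : c ∈ Set.Icc (0 : ℝ) 1) :
    (riccati A C Φw Φv (c • Q₁ + (1 - c) • Q₂)
      - (c • riccati A C Φw Φv Q₁ + (1 - c) • riccati A C Φw Φv Q₂)).PosSemidef :=
  riccati_concave_general A C Φw Φv hΦv Q₁ Q₂ hQ₁ hQ₂ c hc
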